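/- arXiv:0902.0306 — 2 statements merged into one kernel-verified Lean document; each statement's English description precedes it below -/
import Mathlib

section
/- The cut metric satisfies the triangle inequality: for probability spaces S₁, S₂, S₃ and integrable functions W_ℓ : S_ℓ × S_ℓ → ℝ (ℓ = 1,2,3), one has δ□(W₁, W₃) ≤ δ□(W₁, W₂) + δ□(W₂, W₃), where δ□(U, V) := inf over pairs of measure-preserving maps φ: S → S_U, ψ: S → S_V from a common probability space of ‖U∘(φ×φ) − V∘(ψ×ψ)‖□. -/
/-!
Glue a near-optimal coupling `(φ₁, φ₂)` of `(μ₁, μ₂)` and a near-optimal coupling `(ψ₂, ψ₃)` of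
`(μ₂, μ₃)` into one probability space carrying all four maps. Gluing along `S₂` itself would need
a disintegration, which arbitrary measurable spaces lack; instead approximate `W₂` in `L¹` by a
step function on a finite measurable partition of `S₂` and glue the two couplings independently
inside corresponding partition classes. Then `φ₂` and `ψ₂` land in the same class almost surely,
so they pull `W₂` back to `L¹`-close functions. Pulling back along a measure-preserving map does
not increase the cut norm (Fubini and the bathtub principle in each variable), and the triangle
inequality for the cut norm finishes the proof.
-/

open MeasureTheory

/-- The cut norm of an integrable function on the square of a probability
space. -/
noncomputable def cutNorm {Ω : Type} [MeasurableSpace Ω] (μ : Measure Ω)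
    (U : Ω × Ω → ℝ) : ℝ :=
  sSup {t : ℝ | ∃ A B : Set Ω, MeasurableSet A ∧ MeasurableSet B ∧
    t = |∫ p in A ×ˢ B, U p ∂(μ.prod μ)|}

/-- The cut metric between functions on (possibly different) probability
spaces: the infimum of `‖W₁^{φ₁} − W₂^{φ₂}‖□` over couplings, i.e. pairs of
measure-preserving maps from a common probability space. -/
noncomputable def cutDist {S₁ S₂ : Type} [MeasurableSpace S₁]
    [MeasurableSpace S₂] (μ₁ : Measure S₁) (μ₂ : Measure S₂)
    (W₁ : S₁ × S₁ → ℝ) (W₂ : S₂ × S₂ → ℝ) : ℝ :=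
  sInf {t : ℝ | ∃ (Ω : Type) (_ : MeasurableSpace Ω) (μ : Measure Ω)
    (φ₁ : Ω → S₁) (φ₂ : Ω → S₂), IsProbabilityMeasure μ ∧
    MeasurePreserving φ₁ μ μ₁ ∧ MeasurePreserving φ₂ μ μ₂ ∧
    t = cutNorm μ (fun p => W₁ (φ₁ p.1, φ₁ p.2) - W₂ (φ₂ p.1, φ₂ p.2))}

lemma abs_setIntegral_le_integral_abs {α : Type*} [MeasurableSpace α] {ν : Measure α}
    {F : α → ℝ} (hF : Integrable F ν) (s : Set α) : |∫ x in s, F x ∂ν| ≤ ∫ x, |F x| ∂ν :=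
  abs_integral_le_integral_abs.trans
    (setIntegral_le_integral hF.abs (ae_of_all _ fun _ => abs_nonneg _))

section CutNorm

variable {Ω : Type} [MeasurableSpace Ω] {μ : Measure Ω}

lemma cutNorm_nonneg (F : Ω × Ω → ℝ) : 0 ≤ cutNorm μ F :=
  Real.sSup_nonneg (by rintro t ⟨A, B, -, -, rfl⟩; exact abs_nonneg _)

lemma cutNorm_le {F : Ω × Ω → ℝ} {c : ℝ} (hc : 0 ≤ c)
    (h : ∀ A B : Set Ω, MeasurableSet A → MeasurableSet B →
      |∫ p in A ×ˢ B, F p ∂(μ.prod μ)| ≤ c) : cutNorm μ F ≤ c :=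
  Real.sSup_le (by rintro t ⟨A, B, hA, hB, rfl⟩; exact h A B hA hB) hc

lemma abs_setIntegral_le_cutNorm {F : Ω × Ω → ℝ} (hF : Integrable F (μ.prod μ))
    {A B : Set Ω} (hA : MeasurableSet A) (hB : MeasurableSet B) :
    |∫ p in A ×ˢ B, F p ∂(μ.prod μ)| ≤ cutNorm μ F := by
  refine le_csSup ⟨∫ p, |F p| ∂(μ.prod μ), ?_⟩ ⟨A, B, hA, hB, rfl⟩
  rintro t ⟨A, B, -, -, rfl⟩
  exact abs_setIntegral_le_integral_abs hF _

lemma cutNorm_le_toReal_eLpNorm {F : Ω × Ω → ℝ} (hF : Integrable F (μ.prod μ)) :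
    cutNorm μ F ≤ (eLpNorm F 1 (μ.prod μ)).toReal := by
  have hL1 : ∫ p, |F p| ∂(μ.prod μ) = (eLpNorm F 1 (μ.prod μ)).toReal := by
    simp_rw [← Real.norm_eq_abs]
    rw [integral_norm_eq_lintegral_enorm hF.1, eLpNorm_one_eq_lintegral_enorm]
  exact cutNorm_le ENNReal.toReal_nonneg fun A B _ _ => hL1 ▸ abs_setIntegral_le_integral_abs hF _

lemma cutNorm_sub_le_add {f g h : Ω × Ω → ℝ} (hf : Integrable f (μ.prod μ))
    (hg : Integrable g (μ.prod μ)) (hh : Integrable h (μ.prod μ)) :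
    cutNorm μ (fun p => f p - h p) ≤
      cutNorm μ (fun p => f p - g p) + cutNorm μ (fun p => g p - h p) := by
  refine cutNorm_le (add_nonneg (cutNorm_nonneg _) (cutNorm_nonneg _)) fun A B hA hB => ?_
  have hsplit : ∫ p in A ×ˢ B, (f p - h p) ∂(μ.prod μ) =
      (∫ p in A ×ˢ B, (f p - g p) ∂(μ.prod μ)) + ∫ p in A ×ˢ B, (g p - h p) ∂(μ.prod μ) := by
    have := integral_add (μ := (μ.prod μ).restrict (A ×ˢ B)) (f := fun p => f p - g p)
      (g := fun p => g p - h p) (hf.sub hg).integrableOn (hg.sub hh).integrableOn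
    simpa only [sub_add_sub_cancel] using this
  rw [hsplit]
  exact (abs_add_le _ _).trans
    (add_le_add (abs_setIntegral_le_cutNorm (hf.sub hg) hA hB)
      (abs_setIntegral_le_cutNorm (hg.sub hh) hA hB))

/-- Bathtub principle: `C` is the set where `h ≥ 0`. -/
lemma exists_integral_le_setIntegral {ν : Measure Ω} (hνμ : ν ≤ μ) {h : Ω → ℝ}
    (hh : Integrable h μ) : ∃ C, MeasurableSet C ∧ ∫ x, h x ∂ν ≤ ∫ x in C, h x ∂μ := by
  set C := {x | 0 ≤ hh.1.mk h x}
  have hC : MeasurableSet C :=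
    measurableSet_le measurable_const hh.1.stronglyMeasurable_mk.measurable
  refine ⟨C, hC, ?_⟩
  calc ∫ x, h x ∂ν ≤ ∫ x, max (h x) 0 ∂ν :=
        integral_mono (hh.mono_measure hνμ) (hh.mono_measure hνμ).pos_part
          fun x => le_max_left _ _
    _ ≤ ∫ x, max (h x) 0 ∂μ :=
        integral_mono_measure hνμ (ae_of_all _ fun x => le_max_right _ _) hh.pos_part
    _ = ∫ x in C, h x ∂μ := by
        rw [← integral_indicator hC]
        refine integral_congr_ae ?_
        filter_upwards [hh.1.ae_eq_mk] with x hx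
        by_cases hx0 : 0 ≤ hh.1.mk h x
        · simp [C, Set.indicator_of_mem, hx0, hx]
        · simp [C, hx0, hx, (not_le.mp hx0).le]

lemma exists_abs_integral_le_abs_setIntegral {ν : Measure Ω} (hνμ : ν ≤ μ) {h : Ω → ℝ}
    (hh : Integrable h μ) : ∃ C, MeasurableSet C ∧ |∫ x, h x ∂ν| ≤ |∫ x in C, h x ∂μ| := by
  rcases le_total 0 (∫ x, h x ∂ν) with hpos | hneg
  · obtain ⟨C, hC, hle⟩ := exists_integral_le_setIntegral hνμ hh
    exact ⟨C, hC, by rw [abs_of_nonneg hpos]; exact hle.trans (le_abs_self _)⟩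
  · obtain ⟨C, hC, hle⟩ := exists_integral_le_setIntegral hνμ hh.neg
    refine ⟨C, hC, ?_⟩
    rw [abs_of_nonpos hneg, ← abs_neg (∫ x in C, h x ∂μ), ← integral_neg, ← integral_neg]
    exact hle.trans (le_abs_self _)

lemma abs_integral_prod_le_cutNorm [SFinite μ] {ν₁ ν₂ : Measure Ω} [SFinite ν₁] [SFinite ν₂]
    (h₁ : ν₁ ≤ μ) (h₂ : ν₂ ≤ μ) {F : Ω × Ω → ℝ} (hF : Integrable F (μ.prod μ)) :
    |∫ z, F z ∂(ν₁.prod ν₂)| ≤ cutNorm μ F := by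
  have hF₂ : Integrable F (μ.prod ν₂) := hF.mono_measure (Measure.prod_mono le_rfl h₂)
  obtain ⟨C, hC, hle₁⟩ := exists_abs_integral_le_abs_setIntegral h₁ hF₂.integral_prod_left
  have hFC : Integrable F ((μ.restrict C).prod μ) :=
    hF.mono_measure (Measure.prod_mono Measure.restrict_le_self le_rfl)
  obtain ⟨D, hD, hle₂⟩ := exists_abs_integral_le_abs_setIntegral h₂ hFC.integral_prod_right
  have hFC₂ : Integrable F ((μ.restrict C).prod ν₂) :=
    hF.mono_measure (Measure.prod_mono Measure.restrict_le_self h₂)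
  have hFCD : Integrable F ((μ.restrict C).prod (μ.restrict D)) := by
    rw [Measure.prod_restrict]; exact hF.restrict
  calc |∫ z, F z ∂(ν₁.prod ν₂)| = |∫ x, ∫ y, F (x, y) ∂ν₂ ∂ν₁| := by
        rw [integral_prod _ (hF.mono_measure (Measure.prod_mono h₁ h₂))]
    _ ≤ |∫ x in C, ∫ y, F (x, y) ∂ν₂ ∂μ| := hle₁
    _ = |∫ y, ∫ x in C, F (x, y) ∂μ ∂ν₂| := by
        rw [← integral_prod _ hFC₂, integral_prod_symm _ hFC₂]
    _ ≤ |∫ y in D, ∫ x in C, F (x, y) ∂μ ∂μ| := hle₂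
    _ = |∫ z in C ×ˢ D, F z ∂(μ.prod μ)| := by
        rw [← integral_prod_symm _ hFCD, Measure.prod_restrict]
    _ ≤ cutNorm μ F := abs_setIntegral_le_cutNorm hF hC hD

variable {Λ : Type} [MeasurableSpace Λ] {lam : Measure Λ} {π : Λ → Ω}

lemma integrable_comp_prodMap [SFinite lam] (hπ : MeasurePreserving π lam μ)
    {F : Ω × Ω → ℝ} (hF : Integrable F (μ.prod μ)) :
    Integrable (fun z => F (π z.1, π z.2)) (lam.prod lam) :=
  ((hπ.prod hπ).integrable_comp hF.1).mpr hF

lemma cutNorm_comp_le [SFinite lam] [SFinite μ] (hπ : MeasurePreserving π lam μ)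
    {F : Ω × Ω → ℝ} (hF : Integrable F (μ.prod μ)) :
    cutNorm lam (fun z => F (π z.1, π z.2)) ≤ cutNorm μ F := by
  refine cutNorm_le (cutNorm_nonneg F) fun A B hA hB => ?_
  have hle : ∀ s, (lam.restrict s).map π ≤ μ := fun s =>
    hπ.map_eq ▸ Measure.map_mono Measure.restrict_le_self hπ.measurable
  have hpush : ∫ z in A ×ˢ B, F (π z.1, π z.2) ∂(lam.prod lam) =
      ∫ z, F z ∂(((lam.restrict A).map π).prod ((lam.restrict B).map π)) := by
    rw [Measure.map_prod_map _ _ hπ.measurable hπ.measurable,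
      integral_map (hπ.measurable.prodMap hπ.measurable).aemeasurable, Measure.prod_restrict]
    · rfl
    · rw [← Measure.map_prod_map _ _ hπ.measurable hπ.measurable]
      exact hF.1.mono_measure (Measure.prod_mono (hle A) (hle B))
  rw [hpush]
  exact abs_integral_prod_le_cutNorm (hle A) (hle B) hF

end CutNorm

section Coupling

open Set

variable {α β J : Type*} [MeasurableSpace α] [MeasurableSpace β] [MeasurableSpace J]

lemma MeasureTheory.Measure.sum_restrict_fiber [Countable J] [MeasurableSingletonClass J]
    (μ : Measure α) {u : α → J} (hu : Measurable u) :
    Measure.sum (fun j => μ.restrict (u ⁻¹' {j})) = μ := by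
  rw [← Measure.restrict_iUnion (pairwise_disjoint_fiber u)
    fun j => hu (measurableSet_singleton j), ← preimage_iUnion, iUnion_of_singleton,
    preimage_univ, Measure.restrict_univ]

lemma MeasureTheory.MeasurePreserving.isFiniteMeasure {f : α → β} {μ : Measure α}
    {ν : Measure β} [IsFiniteMeasure ν] (hf : MeasurePreserving f μ ν) : IsFiniteMeasure μ :=
  have : IsFiniteMeasure (μ.map f) := hf.map_eq ▸ ‹_›
  Measure.isFiniteMeasure_of_map hf.aemeasurable

lemma MeasureTheory.MeasurePreserving.isProbabilityMeasure {f : α → β} {μ : Measure α}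
    {ν : Measure β} [IsProbabilityMeasure ν] (hf : MeasurePreserving f μ ν) :
    IsProbabilityMeasure μ :=
  have : IsProbabilityMeasure (μ.map f) := hf.map_eq ▸ ‹_›
  Measure.isProbabilityMeasure_of_map f

lemma map_fst_normalized_prod {μ : Measure α} {ν : Measure β} [IsFiniteMeasure μ]
    [SFinite ν] (h : μ univ = ν univ) : ((μ univ)⁻¹ • μ.prod ν).map Prod.fst = μ := by
  rw [Measure.map_smul, Measure.map_fst_prod, smul_smul, ← h]
  rcases eq_or_ne (μ univ) 0 with h0 | h0
  · simp [Measure.measure_univ_eq_zero.mp h0]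
  · rw [ENNReal.inv_mul_cancel h0 (measure_ne_top _ _), one_smul]

lemma map_snd_normalized_prod {μ : Measure α} {ν : Measure β} [IsFiniteMeasure μ]
    [SFinite ν] (h : μ univ = ν univ) : ((μ univ)⁻¹ • μ.prod ν).map Prod.snd = ν := by
  rw [Measure.map_smul, Measure.map_snd_prod, smul_smul, h]
  rcases eq_or_ne (ν univ) 0 with h0 | h0
  · simp [Measure.measure_univ_eq_zero.mp h0]
  · rw [ENNReal.inv_mul_cancel h0 (h ▸ measure_ne_top _ _), one_smul]

/-- Glue `μ` and `ν` independently inside each pair of fibres `u ⁻¹' {j}`, `v ⁻¹' {j}`. -/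
lemma exists_coupling_ae_eq [Countable J] [MeasurableSingletonClass J] (μ : Measure α)
    (ν : Measure β) [IsFiniteMeasure μ] [IsFiniteMeasure ν] {u : α → J} {v : β → J}
    (hu : Measurable u) (hv : Measurable v) (huv : μ.map u = ν.map v) :
    ∃ τ : Measure (α × β), MeasurePreserving Prod.fst τ μ ∧ MeasurePreserving Prod.snd τ ν ∧
      ∀ᵐ z ∂τ, u z.1 = v z.2 := by
  have hfiber : ∀ j, μ.restrict (u ⁻¹' {j}) univ = ν.restrict (v ⁻¹' {j}) univ := fun j => by
    rw [Measure.restrict_apply_univ, Measure.restrict_apply_univ,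
      ← Measure.map_apply hu (measurableSet_singleton j), huv,
      Measure.map_apply hv (measurableSet_singleton j)]
  refine ⟨Measure.sum fun j => (μ.restrict (u ⁻¹' {j}) univ)⁻¹ •
    (μ.restrict (u ⁻¹' {j})).prod (ν.restrict (v ⁻¹' {j})), ⟨measurable_fst, ?_⟩,
    ⟨measurable_snd, ?_⟩, ?_⟩
  · simp_rw [Measure.map_sum measurable_fst.aemeasurable, map_fst_normalized_prod (hfiber _)]
    exact Measure.sum_restrict_fiber μ hu
  · simp_rw [Measure.map_sum measurable_snd.aemeasurable, map_snd_normalized_prod (hfiber _)]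
    exact Measure.sum_restrict_fiber ν hv
  · refine Measure.ae_sum_iff.mpr fun j => Measure.ae_smul_measure ?_ _
    rw [Measure.prod_restrict]
    exact ae_restrict_of_forall_mem ((hu (measurableSet_singleton j)).prod
      (hv (measurableSet_singleton j))) fun z hz => hz.1.trans hz.2.symm

end Coupling

section StepFunction

open Set
open scoped ENNReal symmDiff

variable {S : Type} [MeasurableSpace S]

def IsStepFunction {β : Type*} (f : S × S → β) : Prop :=
  ∃ (J : Type) (_ : MeasurableSpace J) (_ : DiscreteMeasurableSpace J) (_ : Finite J)
    (κ : S → J) (g : J → J → β), Measurable κ ∧ ∀ x y, f (x, y) = g (κ x) (κ y)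

namespace IsStepFunction

variable {β γ δ : Type*} {f : S × S → β} {f' : S × S → γ}

lemma const (b : β) : IsStepFunction (fun _ : S × S => b) :=
  ⟨Unit, ⊤, ⟨fun _ => trivial⟩, inferInstance, fun _ => (), fun _ _ => b, measurable_const,
    fun _ _ => rfl⟩

lemma comp (F : β → γ) (hf : IsStepFunction f) : IsStepFunction (fun z => F (f z)) := by
  obtain ⟨J, _, _, _, κ, g, hκ, hf⟩ := hf
  exact ⟨J, _, ‹_›, ‹_›, κ, fun i j => F (g i j), hκ, fun x y => congrArg F (hf x y)⟩

lemma map₂ (F : β → γ → δ) (hf : IsStepFunction f) (hf' : IsStepFunction f') :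
    IsStepFunction (fun z => F (f z) (f' z)) := by
  obtain ⟨J, _, _, _, κ, g, hκ, hf⟩ := hf
  obtain ⟨J', _, _, _, κ', g', hκ', hf'⟩ := hf'
  exact ⟨J × J', _, inferInstance, inferInstance, fun x => (κ x, κ' x),
    fun i j => F (g i.1 j.1) (g' i.2 j.2), hκ.prodMk hκ',
    fun x y => by dsimp only; rw [hf, hf']⟩

lemma mem_prod {A B : Set S} (hA : MeasurableSet A) (hB : MeasurableSet B) :
    IsStepFunction (· ∈ A ×ˢ B) :=
  ⟨Prop × Prop, _, inferInstance, inferInstance, fun x => (x ∈ A, x ∈ B), fun i j => i.1 ∧ j.2,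
    (measurableSet_setOfPred.mp hA).prodMk (measurableSet_setOfPred.mp hB), fun _ _ => rfl⟩

lemma mem_of_mem_generateSetAlgebra {R : Set (S × S)}
    (hR : R ∈ generateSetAlgebra (image2 (· ×ˢ ·) {A : Set S | MeasurableSet A}
      {B : Set S | MeasurableSet B})) :
    IsStepFunction (· ∈ R) := by
  induction hR with
  | base t ht =>
    obtain ⟨A, hA, B, hB, rfl⟩ := ht
    exact mem_prod hA hB
  | empty => exact const False
  | compl t _ ih => exact ih.comp Not
  | union t u _ _ iht ihu => exact iht.map₂ Or ihu

lemma aestronglyMeasurable {f : S × S → ℝ} (hf : IsStepFunction f) {μ : Measure (S × S)} :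
    AEStronglyMeasurable f μ := by
  obtain ⟨J, _, _, _, κ, g, hκ, hf⟩ := hf
  have hfg : f = fun z => Function.uncurry g (Prod.map κ κ z) := funext fun z => hf z.1 z.2
  rw [hfg]
  exact ((Measurable.of_discrete (f := Function.uncurry g)).comp
    (hκ.prodMap hκ)).aestronglyMeasurable

end IsStepFunction

variable (μ : Measure S) [IsFiniteMeasure μ]

lemma exists_isStepFunction_eLpNorm_sub_indicator_le (c : ℝ) {E : Set (S × S)}
    (hE : MeasurableSet E) {ε : ℝ≥0∞} (hε : ε ≠ 0) :
    ∃ w, eLpNorm (w - E.indicator fun _ => c) 1 (μ.prod μ) ≤ ε ∧ IsStepFunction w := by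
  classical
  obtain ⟨δ, hδ, hδε⟩ := ENNReal.exists_nnreal_pos_mul_lt (enorm_ne_top : ‖c‖ₑ ≠ ∞) hε
  have hdense : (μ.prod μ).MeasureDense (generateSetAlgebra
      (image2 (· ×ˢ ·) {A : Set S | MeasurableSet A} {B : Set S | MeasurableSet B})) :=
    Measure.MeasureDense.of_generateFrom_isSetAlgebra_finite (μ.prod μ)
      isSetAlgebra_generateSetAlgebra
      (by rw [generateFrom_generateSetAlgebra_eq, generateFrom_prod])
  obtain ⟨R, hR, hER⟩ := hdense.approx E hE (measure_ne_top _ _) δ hδ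
  refine ⟨R.indicator fun _ => c, ?_,
    (IsStepFunction.mem_of_mem_generateSetAlgebra hR).comp fun b => if b then c else 0⟩
  rw [eLpNorm_indicator_sub_indicator, symmDiff_comm,
    eLpNorm_indicator_const (hE.symmDiff (hdense.measurable R hR)) one_ne_zero
      ENNReal.one_ne_top]
  simp only [ENNReal.toReal_one, div_one, ENNReal.rpow_one]
  calc ‖c‖ₑ * (μ.prod μ) (E ∆ R) ≤ ‖c‖ₑ * δ := by
        gcongr; exact (ENNReal.ofReal_coe_nnreal ▸ hER).le
    _ ≤ ε := by rw [mul_comm]; exact hδε.le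

lemma exists_isStepFunction_eLpNorm_sub_le {W : S × S → ℝ} (hW : Integrable W (μ.prod μ))
    {ε : ℝ≥0∞} (hε : ε ≠ 0) : ∃ w, eLpNorm (W - w) 1 (μ.prod μ) ≤ ε ∧ IsStepFunction w :=
  (memLp_one_iff_integrable.mpr hW).induction_dense ENNReal.one_ne_top IsStepFunction
    (fun c _ hE _ _ hε => exists_isStepFunction_eLpNorm_sub_indicator_le μ c hE hε)
    (fun _ _ hf hg => hf.map₂ (· + ·) hg) (fun _ hf => hf.aestronglyMeasurable) hε

end StepFunction

section Gluing

open scoped ENNReal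

variable {S Ω Ω' : Type} [MeasurableSpace S] [MeasurableSpace Ω] [MeasurableSpace Ω']
  {μ : Measure S} [IsFiniteMeasure μ]

lemma exists_coupling_eLpNorm_sub_le (lam : Measure Ω) (nu : Measure Ω') [IsFiniteMeasure lam]
    [IsFiniteMeasure nu] {φ : Ω → S} {ψ : Ω' → S} (hφ : MeasurePreserving φ lam μ)
    (hψ : MeasurePreserving ψ nu μ) {W : S × S → ℝ} (hW : Integrable W (μ.prod μ))
    {ε : ℝ≥0∞} (hε : ε ≠ 0) :
    ∃ τ : Measure (Ω × Ω'), MeasurePreserving Prod.fst τ lam ∧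
      MeasurePreserving Prod.snd τ nu ∧
      eLpNorm (fun p => W (φ p.1.1, φ p.2.1) - W (ψ p.1.2, ψ p.2.2)) 1 (τ.prod τ) ≤ ε := by
  obtain ⟨w, hWw, hw⟩ := exists_isStepFunction_eLpNorm_sub_le μ hW (ENNReal.half_pos hε).ne'
  have hWw_meas : AEStronglyMeasurable (W - w) (μ.prod μ) := hW.1.sub hw.aestronglyMeasurable
  have hwW_meas : AEStronglyMeasurable (w - W) (μ.prod μ) := hw.aestronglyMeasurable.sub hW.1
  obtain ⟨J, _, _, _, κ, g, hκ, hwg⟩ := hw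
  obtain ⟨τ, hfst, hsnd, hτ⟩ := exists_coupling_ae_eq lam nu (hκ.comp hφ.measurable)
    (hκ.comp hψ.measurable) (by
      rw [← Measure.map_map hκ hφ.measurable, ← Measure.map_map hκ hψ.measurable, hφ.map_eq,
        hψ.map_eq])
  have := hfst.isFiniteMeasure
  refine ⟨τ, hfst, hsnd, ?_⟩
  have hΦ := (hφ.comp hfst).prod (hφ.comp hfst)
  have hΨ := (hψ.comp hsnd).prod (hψ.comp hsnd)
  have hsame : ∀ᵐ p ∂(τ.prod τ), w (φ p.1.1, φ p.2.1) = w (ψ p.1.2, ψ p.2.2) := by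
    filter_upwards [Measure.quasiMeasurePreserving_fst.ae hτ,
      Measure.quasiMeasurePreserving_snd.ae hτ] with p h₁ h₂
    rw [hwg, hwg]
    exact congrArg₂ g h₁ h₂
  calc eLpNorm (fun p => W (φ p.1.1, φ p.2.1) - W (ψ p.1.2, ψ p.2.2)) 1 (τ.prod τ)
      = eLpNorm ((W - w) ∘ Prod.map (φ ∘ Prod.fst) (φ ∘ Prod.fst) +
          (w - W) ∘ Prod.map (ψ ∘ Prod.snd) (ψ ∘ Prod.snd)) 1 (τ.prod τ) := by
        refine eLpNorm_congr_ae ?_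
        filter_upwards [hsame] with p hp
        simp only [Pi.add_apply, Function.comp_apply, Pi.sub_apply, Prod.map, hp]
        ring
    _ ≤ eLpNorm ((W - w) ∘ Prod.map (φ ∘ Prod.fst) (φ ∘ Prod.fst)) 1 (τ.prod τ) +
          eLpNorm ((w - W) ∘ Prod.map (ψ ∘ Prod.snd) (ψ ∘ Prod.snd)) 1 (τ.prod τ) :=
        eLpNorm_add_le (hWw_meas.comp_measurePreserving hΦ)
          (hwW_meas.comp_measurePreserving hΨ) le_rfl
    _ = eLpNorm (W - w) 1 (μ.prod μ) + eLpNorm (W - w) 1 (μ.prod μ) := by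
        rw [eLpNorm_comp_measurePreserving hWw_meas hΦ, eLpNorm_comp_measurePreserving
          hwW_meas hΨ, eLpNorm_sub_comm]
    _ ≤ ε / 2 + ε / 2 := add_le_add hWw hWw
    _ = ε := ENNReal.add_halves ε

end Gluing

section CutDist

variable {S₁ S₂ : Type} [MeasurableSpace S₁] [MeasurableSpace S₂]

lemma cutDist_le_cutNorm {μ₁ : Measure S₁} {μ₂ : Measure S₂} {W₁ : S₁ × S₁ → ℝ}
    {W₂ : S₂ × S₂ → ℝ} {Ω : Type} [MeasurableSpace Ω] {μ : Measure Ω} [IsProbabilityMeasure μ]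
    {φ₁ : Ω → S₁} {φ₂ : Ω → S₂} (hφ₁ : MeasurePreserving φ₁ μ μ₁)
    (hφ₂ : MeasurePreserving φ₂ μ μ₂) :
    cutDist μ₁ μ₂ W₁ W₂ ≤ cutNorm μ (fun p => W₁ (φ₁ p.1, φ₁ p.2) - W₂ (φ₂ p.1, φ₂ p.2)) := by
  unfold cutDist
  apply csInf_le
  · refine ⟨0, ?_⟩
    rintro t ⟨Ω, _, μ, φ₁, φ₂, -, -, -, rfl⟩
    exact cutNorm_nonneg _
  · exact ⟨Ω, _, μ, φ₁, φ₂, ‹_›, hφ₁, hφ₂, rfl⟩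

lemma exists_cutNorm_lt_cutDist_add (μ₁ : Measure S₁) (μ₂ : Measure S₂)
    [IsProbabilityMeasure μ₁] [IsProbabilityMeasure μ₂] (W₁ : S₁ × S₁ → ℝ)
    (W₂ : S₂ × S₂ → ℝ) {ε : ℝ} (hε : 0 < ε) :
    ∃ (Ω : Type) (_ : MeasurableSpace Ω) (μ : Measure Ω) (φ₁ : Ω → S₁) (φ₂ : Ω → S₂),
      IsProbabilityMeasure μ ∧ MeasurePreserving φ₁ μ μ₁ ∧ MeasurePreserving φ₂ μ μ₂ ∧
      cutNorm μ (fun p => W₁ (φ₁ p.1, φ₁ p.2) - W₂ (φ₂ p.1, φ₂ p.2)) <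
        cutDist μ₁ μ₂ W₁ W₂ + ε := by
  obtain ⟨t, ⟨Ω, _, μ, φ₁, φ₂, hμ, hφ₁, hφ₂, rfl⟩, ht⟩ := exists_lt_of_csInf_lt
    (by exact ⟨_, S₁ × S₂, _, μ₁.prod μ₂, Prod.fst, Prod.snd, inferInstance,
      measurePreserving_fst, measurePreserving_snd, rfl⟩)
    (lt_add_of_pos_right (cutDist μ₁ μ₂ W₁ W₂) hε)
  exact ⟨Ω, _, μ, φ₁, φ₂, hμ, hφ₁, hφ₂, ht⟩

end CutDist

/-- The cut metric satisfies the triangle inequality. -/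
theorem cutDist_triangle {S₁ S₂ S₃ : Type}
    [MeasurableSpace S₁] [MeasurableSpace S₂] [MeasurableSpace S₃]
    (μ₁ : Measure S₁) (μ₂ : Measure S₂) (μ₃ : Measure S₃)
    [IsProbabilityMeasure μ₁] [IsProbabilityMeasure μ₂]
    [IsProbabilityMeasure μ₃]
    (W₁ : S₁ × S₁ → ℝ) (W₂ : S₂ × S₂ → ℝ) (W₃ : S₃ × S₃ → ℝ)
    (hW₁ : Integrable W₁ (μ₁.prod μ₁)) (hW₂ : Integrable W₂ (μ₂.prod μ₂))
    (hW₃ : Integrable W₃ (μ₃.prod μ₃)) :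
    cutDist μ₁ μ₃ W₁ W₃ ≤ cutDist μ₁ μ₂ W₁ W₂ + cutDist μ₂ μ₃ W₂ W₃ := by
  refine le_of_forall_pos_le_add fun ε hε => ?_
  have hε₃ : 0 < ε / 3 := by positivity
  obtain ⟨Ω, _, lam, φ₁, φ₂, _, hφ₁, hφ₂, h₁₂⟩ := exists_cutNorm_lt_cutDist_add μ₁ μ₂ W₁ W₂ hε₃
  obtain ⟨Ω', _, nu, ψ₂, ψ₃, _, hψ₂, hψ₃, h₂₃⟩ := exists_cutNorm_lt_cutDist_add μ₂ μ₃ W₂ W₃ hε₃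
  obtain ⟨τ, hfst, hsnd, hτ⟩ := exists_coupling_eLpNorm_sub_le lam nu hφ₂ hψ₂ hW₂
    (ENNReal.ofReal_pos.mpr hε₃).ne'
  have := hfst.isProbabilityMeasure
  have h₁ := integrable_comp_prodMap (hφ₁.comp hfst) hW₁
  have h₂ := integrable_comp_prodMap (hφ₂.comp hfst) hW₂
  have h₂' := integrable_comp_prodMap (hψ₂.comp hsnd) hW₂
  have h₃ := integrable_comp_prodMap (hψ₃.comp hsnd) hW₃
  calc cutDist μ₁ μ₃ W₁ W₃
      ≤ cutNorm τ (fun p => W₁ (φ₁ p.1.1, φ₁ p.2.1) - W₃ (ψ₃ p.1.2, ψ₃ p.2.2)) :=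
        cutDist_le_cutNorm (hφ₁.comp hfst) (hψ₃.comp hsnd)
    _ ≤ cutNorm τ (fun p => W₁ (φ₁ p.1.1, φ₁ p.2.1) - W₂ (φ₂ p.1.1, φ₂ p.2.1)) +
          (cutNorm τ (fun p => W₂ (φ₂ p.1.1, φ₂ p.2.1) - W₂ (ψ₂ p.1.2, ψ₂ p.2.2)) +
            cutNorm τ (fun p => W₂ (ψ₂ p.1.2, ψ₂ p.2.2) - W₃ (ψ₃ p.1.2, ψ₃ p.2.2))) :=
        (cutNorm_sub_le_add h₁ h₂ h₃).trans (add_le_add le_rfl (cutNorm_sub_le_add h₂ h₂' h₃))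
    _ ≤ cutNorm lam (fun p => W₁ (φ₁ p.1, φ₁ p.2) - W₂ (φ₂ p.1, φ₂ p.2)) +
          (ε / 3 + cutNorm nu (fun p => W₂ (ψ₂ p.1, ψ₂ p.2) - W₃ (ψ₃ p.1, ψ₃ p.2))) := by
        gcongr
        · exact cutNorm_comp_le hfst
            ((integrable_comp_prodMap hφ₁ hW₁).sub (integrable_comp_prodMap hφ₂ hW₂))
        · exact (cutNorm_le_toReal_eLpNorm (h₂.sub h₂')).trans
            (ENNReal.toReal_le_of_le_ofReal hε₃.le hτ)
        · exact cutNorm_comp_le hsnd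
            ((integrable_comp_prodMap hψ₂ hW₂).sub (integrable_comp_prodMap hψ₃ hW₃))
    _ ≤ cutDist μ₁ μ₂ W₁ W₂ + cutDist μ₂ μ₃ W₂ W₃ + ε := by linarith
end

section
/- Counting lemma for simple digraphs in cut metric: let W₁ : S₁² → [0,1] and W₂ : S₂² → [0,1] be measurable functions on probability spaces, and let F be a finite simple digraph (no loops and no pair of opposite edges) with m edges. Define t(F, W) := ∫_{S^{|F|}} ∏_{(i,j) ∈ E(F)} W(x_i, x_j) ∏_i dμ(x_i). Then |t(F, W₁) − t(F, W₂)| ≤ m · δ□(W₁, W₂). -/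
/-!
Couple the two probability spaces and replace `W₁` by `W₂` one edge at a time. A single
replacement changes the density by the integral of the product of the other edge weights
times `(W₁ - W₂)(x i, x j)`. Since the digraph is simple, no other edge joins `i` and `j`, so
once all other coordinates are frozen that product splits as `a (x i) * b (x j)` with
`a, b` valued in `[0, 1]`, and the integral over `(x i, x j)` is at most the cut norm of
`W₁ - W₂`. Taking the infimum over couplings gives the bound with the cut distance.
-/

open MeasureTheory

/-- The cut norm (functional version) of a function on the square of a
probability space: supremum over measurable `f, g : Ω → [-1,1]`. -/
noncomputable def cutNorm₂ {Ω : Type} [MeasurableSpace Ω] (μ : Measure Ω)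
    (U : Ω × Ω → ℝ) : ℝ :=
  sSup {t : ℝ | ∃ f g : Ω → ℝ, Measurable f ∧ Measurable g ∧
    (∀ x, f x ∈ Set.Icc (-1 : ℝ) 1) ∧ (∀ x, g x ∈ Set.Icc (-1 : ℝ) 1) ∧
    t = |∫ p, f p.1 * U p * g p.2 ∂(μ.prod μ)|}

/-- The cut metric between functions on (possibly different) probability
spaces. -/
noncomputable def cutDist₂ {S₁ S₂ : Type} [MeasurableSpace S₁]
    [MeasurableSpace S₂] (μ₁ : Measure S₁) (μ₂ : Measure S₂)
    (W₁ : S₁ × S₁ → ℝ) (W₂ : S₂ × S₂ → ℝ) : ℝ :=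
  sInf {t : ℝ | ∃ (Ω : Type) (_ : MeasurableSpace Ω) (μ : Measure Ω)
    (φ₁ : Ω → S₁) (φ₂ : Ω → S₂), IsProbabilityMeasure μ ∧
    MeasurePreserving φ₁ μ μ₁ ∧ MeasurePreserving φ₂ μ μ₂ ∧
    t = cutNorm₂ μ (fun p => W₁ (φ₁ p.1, φ₁ p.2) - W₂ (φ₂ p.1, φ₂ p.2))}

/-- The homomorphism density of a simple digraph with edge set `E` in a
function `W` on the square of a probability space. -/
noncomputable def homDensity {S : Type} [MeasurableSpace S] (μ : Measure S)
    (k : ℕ) (E : Finset (Fin k × Fin k)) (W : S × S → ℝ) : ℝ :=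
  ∫ x : Fin k → S, ∏ p ∈ E, W (x p.1, x p.2) ∂(Measure.pi fun _ => μ)

section UpdatePair

variable {ι : Type*} [Fintype ι] [DecidableEq ι] {α : ι → Type*} [∀ i, MeasurableSpace (α i)]
  (μ : ∀ i, Measure (α i)) [∀ i, IsProbabilityMeasure (μ i)]

theorem measurePreserving_update (i : ι) :
    MeasurePreserving (fun p : (∀ j, α j) × α i => Function.update p.1 i p.2)
      ((Measure.pi μ).prod (μ i)) (Measure.pi μ) := by
  refine ⟨measurable_update', (Measure.pi_eq fun s hs => ?_).symm⟩
  have hpre : (fun p : (∀ j, α j) × α i => Function.update p.1 i p.2) ⁻¹' Set.univ.pi s =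
      Set.univ.pi (Function.update s i Set.univ) ×ˢ s i := by
    ext ⟨x, u⟩
    simp only [Set.mem_preimage, Set.mem_univ_pi, Set.mem_prod]
    rw [Function.forall_update_iff x (fun j t => t ∈ s j),
      Function.forall_update_iff s (fun j t => x j ∈ t)]
    simp [and_comm]
  rw [Measure.map_apply measurable_update' (.univ_pi hs), hpre, Measure.prod_prod,
    Measure.pi_pi, Fintype.prod_eq_prod_compl_mul i,
    Fintype.prod_eq_prod_compl_mul i (f := fun j => μ j (s j))]
  simp only [Function.update_self, measure_univ, mul_one]
  congr 1
  exact Finset.prod_congr rfl fun j hj => by rw [Function.update_of_ne (by simpa using hj)]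

theorem measurePreserving_update_update (i j : ι) :
    MeasurePreserving
      (fun p : (∀ l, α l) × (α i × α j) => Function.update (Function.update p.1 i p.2.1) j p.2.2)
      ((Measure.pi μ).prod ((μ i).prod (μ j))) (Measure.pi μ) :=
  (measurePreserving_update μ j).comp <|
    ((measurePreserving_update μ i).prod (MeasurePreserving.id (μ j))).comp
      (measurePreserving_prodAssoc _ _ _).symm

theorem integral_eq_integral_integral_update_update (i j : ι) {F : (∀ l, α l) → ℝ}
    (hF : Integrable F (Measure.pi μ)) :
    ∫ x, F x ∂Measure.pi μ =
      ∫ x, ∫ p, F (Function.update (Function.update x i p.1) j p.2) ∂(μ i).prod (μ j)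
        ∂Measure.pi μ := by
  have hT := measurePreserving_update_update μ i j
  have hFT : ∫ q, F (Function.update (Function.update q.1 i q.2.1) j q.2.2)
      ∂(Measure.pi μ).prod ((μ i).prod (μ j)) = ∫ x, F x ∂Measure.pi μ := by
    rw [← integral_map hT.measurable.aemeasurable
      (by rw [hT.map_eq]; exact hF.aestronglyMeasurable), hT.map_eq]
  rw [← hFT]
  exact integral_prod _ ((hT.integrable_comp hF.aestronglyMeasurable).mpr hF)

theorem abs_integral_le_of_abs_integral_update_update_le (i j : ι) {F : (∀ l, α l) → ℝ}
    (hF : Integrable F (Measure.pi μ)) {c : ℝ}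
    (h : ∀ x, |∫ p, F (Function.update (Function.update x i p.1) j p.2) ∂(μ i).prod (μ j)| ≤ c) :
    |∫ x, F x ∂Measure.pi μ| ≤ c := by
  rw [integral_eq_integral_integral_update_update μ i j hF]
  simpa using norm_integral_le_of_norm_le_const (μ := Measure.pi μ)
    (ae_of_all _ fun x => (Real.norm_eq_abs _).trans_le (h x))

end UpdatePair

theorem le_cutNorm₂ {Ω : Type} [MeasurableSpace Ω] (μ : Measure Ω) [IsFiniteMeasure μ]
    {U : Ω × Ω → ℝ} {C : ℝ} (hU : ∀ p, |U p| ≤ C) {f g : Ω → ℝ}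
    (hf : Measurable f) (hg : Measurable g)
    (hf1 : ∀ x, f x ∈ Set.Icc (-1 : ℝ) 1) (hg1 : ∀ x, g x ∈ Set.Icc (-1 : ℝ) 1) :
    |∫ p, f p.1 * U p * g p.2 ∂(μ.prod μ)| ≤ cutNorm₂ μ U := by
  refine le_csSup ⟨C * (μ.prod μ).real Set.univ, ?_⟩ ⟨f, g, hf, hg, hf1, hg1, rfl⟩
  rintro _ ⟨f, g, -, -, hf1, hg1, rfl⟩
  rw [← Real.norm_eq_abs]
  refine norm_integral_le_of_norm_le_const (ae_of_all _ fun p => ?_)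
  have hf1 : |f p.1| ≤ 1 := abs_le.mpr (hf1 p.1)
  have hg1 : |g p.2| ≤ 1 := abs_le.mpr (hg1 p.2)
  have hC : 0 ≤ C := (abs_nonneg _).trans (hU p)
  calc ‖f p.1 * U p * g p.2‖ = |f p.1| * |U p| * |g p.2| := by simp
    _ ≤ 1 * C * 1 := by gcongr; exact hU p
    _ = C := by ring

theorem le_mul_csInf_of_forall_le_mul {T : Set ℝ} (hT : T.Nonempty) {a c : ℝ} (hc : 0 ≤ c)
    (h : ∀ t ∈ T, a ≤ c * t) : a ≤ c * sInf T := by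
  rw [← smul_eq_mul, ← Real.sInf_smul_of_nonneg hc]
  exact le_csInf hT.smul_set (by rintro _ ⟨t, ht, rfl⟩; exact h t ht)

section HomWeight

variable {ι Ω : Type*}

def homWeight (E : Finset (ι × ι)) (V : ι × ι → Ω × Ω → ℝ) (x : ι → Ω) : ℝ :=
  ∏ e ∈ E, V e (x e.1, x e.2)

theorem homWeight_mem_Icc (E : Finset (ι × ι)) {V : ι × ι → Ω × Ω → ℝ}
    (hV : ∀ e p, V e p ∈ Set.Icc (0 : ℝ) 1) (x : ι → Ω) :
    homWeight E V x ∈ Set.Icc (0 : ℝ) 1 :=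
  ⟨Finset.prod_nonneg fun e _ => (hV e _).1,
    Finset.prod_le_one (fun e _ => (hV e _).1) fun e _ => (hV e _).2⟩

theorem homWeight_mem_Icc_neg_one (E : Finset (ι × ι)) {V : ι × ι → Ω × Ω → ℝ}
    (hV : ∀ e p, V e p ∈ Set.Icc (0 : ℝ) 1) (x : ι → Ω) :
    homWeight E V x ∈ Set.Icc (-1 : ℝ) 1 :=
  Set.Icc_subset_Icc (by norm_num) le_rfl (homWeight_mem_Icc E hV x)

variable [MeasurableSpace Ω]

theorem measurable_homWeight (E : Finset (ι × ι)) {V : ι × ι → Ω × Ω → ℝ}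
    (hV : ∀ e, Measurable (V e)) : Measurable (homWeight E V) :=
  Finset.measurable_prod _ fun e _ =>
    (hV e).comp ((measurable_pi_apply _).prodMk (measurable_pi_apply _))

theorem integrable_homWeight (E : Finset (ι × ι)) {V : ι × ι → Ω × Ω → ℝ}
    (hVm : ∀ e, Measurable (V e)) (hV : ∀ e p, V e p ∈ Set.Icc (0 : ℝ) 1)
    (ν : Measure (ι → Ω)) [IsFiniteMeasure ν] : Integrable (homWeight E V) ν :=
  .of_bound (measurable_homWeight E hVm).aestronglyMeasurable 1 <| ae_of_all _ fun x =>
    abs_le.mpr (homWeight_mem_Icc_neg_one E hV x)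

end HomWeight

theorem homDensity_eq_integral_homWeight {S : Type} [MeasurableSpace S] (μ : Measure S) (k : ℕ)
    (E : Finset (Fin k × Fin k)) (W : S × S → ℝ) :
    homDensity μ k E W = ∫ x, homWeight E (fun _ => W) x ∂Measure.pi fun _ => μ :=
  rfl

theorem homDensity_comp_of_measurePreserving {Ω S : Type} [MeasurableSpace Ω] [MeasurableSpace S]
    {μ : Measure Ω} {ν : Measure S} [SigmaFinite ν] {φ : Ω → S} (hφ : MeasurePreserving φ μ ν)
    {W : S × S → ℝ} (hW : Measurable W) (k : ℕ) (E : Finset (Fin k × Fin k)) :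
    homDensity μ k E (fun p => W (φ p.1, φ p.2)) = homDensity ν k E W := by
  have hΦ : MeasurePreserving (fun (x : Fin k → Ω) l => φ (x l))
      (Measure.pi fun _ => μ) (Measure.pi fun _ => ν) :=
    measurePreserving_pi _ _ fun _ => hφ
  rw [homDensity_eq_integral_homWeight, homDensity_eq_integral_homWeight, ← hΦ.map_eq,
    integral_map hΦ.measurable.aemeasurable
      (measurable_homWeight E fun _ => hW).aestronglyMeasurable]
  rfl

theorem homWeight_update_update {ι Ω : Type*} [DecidableEq ι] {E : Finset (ι × ι)} {i j : ι}
    (hij : i ≠ j) (hE : (i, j) ∉ E) (hE' : (j, i) ∉ E) (V : ι × ι → Ω × Ω → ℝ)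
    (x : ι → Ω) (u v : Ω) :
    homWeight E V (Function.update (Function.update x i u) j v) =
      homWeight {e ∈ E | e.1 ≠ j ∧ e.2 ≠ j} V (Function.update x i u) *
        homWeight {e ∈ E | ¬(e.1 ≠ j ∧ e.2 ≠ j)} V (Function.update x j v) := by
  rw [homWeight, ← Finset.prod_filter_mul_prod_filter_not E fun e => e.1 ≠ j ∧ e.2 ≠ j]
  congr 1
  · refine Finset.prod_congr rfl fun e he => ?_
    obtain ⟨-, h1, h2⟩ := Finset.mem_filter.mp he
    rw [Function.update_of_ne h1, Function.update_of_ne h2]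
  · refine Finset.prod_congr rfl fun e he => ?_
    obtain ⟨heE, hej⟩ := Finset.mem_filter.mp he
    have hei : e.1 ≠ i ∧ e.2 ≠ i := by
      obtain ⟨a, b⟩ := e
      grind
    rw [Function.update_comm hij, Function.update_of_ne hei.1, Function.update_of_ne hei.2]

theorem abs_integral_homWeight_mul_le_cutNorm₂ {ι : Type*} {Ω : Type} [Fintype ι] [DecidableEq ι]
    [MeasurableSpace Ω] (μ : Measure Ω) [IsProbabilityMeasure μ] {E : Finset (ι × ι)} {i j : ι}
    (hij : i ≠ j) (hE : (i, j) ∉ E) (hE' : (j, i) ∉ E) {V : ι × ι → Ω × Ω → ℝ}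
    (hVm : ∀ e, Measurable (V e)) (hV : ∀ e p, V e p ∈ Set.Icc (0 : ℝ) 1) {U : Ω × Ω → ℝ}
    (hUm : Measurable U) (hU : ∀ p, |U p| ≤ 1) :
    |∫ x, homWeight E V x * U (x i, x j) ∂Measure.pi fun _ => μ| ≤ cutNorm₂ μ U := by
  have hF : Integrable (fun x => homWeight E V x * U (x i, x j)) (Measure.pi fun _ => μ) := by
    refine .of_bound ((measurable_homWeight E hVm).mul (hUm.comp
      ((measurable_pi_apply i).prodMk (measurable_pi_apply j)))).aestronglyMeasurable 1
      (ae_of_all _ fun x => ?_)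
    rw [Real.norm_eq_abs, abs_mul]
    exact mul_le_one₀ (abs_le.mpr (homWeight_mem_Icc_neg_one E hV x)) (abs_nonneg _) (hU _)
  refine abs_integral_le_of_abs_integral_update_update_le (fun _ => μ) i j hF fun x => ?_
  have hsplit : ∀ p : Ω × Ω,
      homWeight E V (Function.update (Function.update x i p.1) j p.2) *
          U (Function.update (Function.update x i p.1) j p.2 i,
            Function.update (Function.update x i p.1) j p.2 j) =
        homWeight {e ∈ E | e.1 ≠ j ∧ e.2 ≠ j} V (Function.update x i p.1) * U p *
          homWeight {e ∈ E | ¬(e.1 ≠ j ∧ e.2 ≠ j)} V (Function.update x j p.2) := by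
    intro p
    rw [homWeight_update_update hij hE hE', Function.update_self, Function.update_of_ne hij,
      Function.update_self]
    ring
  rw [integral_congr_ae (ae_of_all _ hsplit)]
  exact le_cutNorm₂ μ hU ((measurable_homWeight _ hVm).comp (measurable_update x))
    ((measurable_homWeight _ hVm).comp (measurable_update x))
    (fun _ => homWeight_mem_Icc_neg_one _ hV _) (fun _ => homWeight_mem_Icc_neg_one _ hV _)

theorem abs_integral_homWeight_sub_update_le {ι : Type*} {Ω : Type} [Fintype ι] [DecidableEq ι]
    [MeasurableSpace Ω] (μ : Measure Ω) [IsProbabilityMeasure μ] {E : Finset (ι × ι)}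
    {a : ι × ι} (ha : a ∈ E) (hloop : a.1 ≠ a.2) (hrev : (a.2, a.1) ∉ E)
    {V : ι × ι → Ω × Ω → ℝ} (hVm : ∀ e, Measurable (V e))
    (hV : ∀ e p, V e p ∈ Set.Icc (0 : ℝ) 1) {W : Ω × Ω → ℝ} (hWm : Measurable W)
    (hW : ∀ p, W p ∈ Set.Icc (0 : ℝ) 1) :
    |∫ x, homWeight E V x ∂(Measure.pi fun _ => μ) -
        ∫ x, homWeight E (Function.update V a W) x ∂(Measure.pi fun _ => μ)| ≤
      cutNorm₂ μ (fun p => V a p - W p) := by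
  have hVWm : ∀ e, Measurable (Function.update V a W e) :=
    (Function.forall_update_iff V fun _ f => Measurable f).mpr ⟨hWm, fun e _ => hVm e⟩
  have hVW : ∀ e p, Function.update V a W e p ∈ Set.Icc (0 : ℝ) 1 :=
    (Function.forall_update_iff V fun _ f => ∀ p, f p ∈ Set.Icc (0 : ℝ) 1).mpr
      ⟨hW, fun e _ => hV e⟩
  have hdiff : ∀ x : ι → Ω, homWeight E V x - homWeight E (Function.update V a W) x =
      homWeight (E.erase a) V x * (V a (x a.1, x a.2) - W (x a.1, x a.2)) := by
    intro x
    have hrest : homWeight (E.erase a) (Function.update V a W) x = homWeight (E.erase a) V x :=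
      Finset.prod_congr rfl fun e he => by rw [Function.update_of_ne (Finset.ne_of_mem_erase he)]
    simp only [homWeight] at hrest ⊢
    rw [← Finset.mul_prod_erase E _ ha, ← Finset.mul_prod_erase E _ ha, hrest,
      Function.update_self]
    ring
  rw [← integral_sub (integrable_homWeight E hVm hV _) (integrable_homWeight E hVWm hVW _),
    integral_congr_ae (ae_of_all _ hdiff)]
  exact abs_integral_homWeight_mul_le_cutNorm₂ μ hloop (Finset.notMem_erase a E)
    (fun h => hrev (Finset.mem_of_mem_erase h)) hVm hV ((hVm a).sub hWm)
    fun p => abs_sub_le_iff.mpr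
      ⟨by linarith [(hV a p).2, (hW p).1], by linarith [(hV a p).1, (hW p).2]⟩

theorem abs_integral_homWeight_sub_piecewise_le {ι : Type*} {Ω : Type} [Fintype ι] [DecidableEq ι]
    [MeasurableSpace Ω] (μ : Measure Ω) [IsProbabilityMeasure μ] {E : Finset (ι × ι)}
    (hsimple : ∀ p ∈ E, p.1 ≠ p.2 ∧ (p.2, p.1) ∉ E) {U₁ U₂ : Ω × Ω → ℝ}
    (hU₁m : Measurable U₁) (hU₂m : Measurable U₂)
    (hU₁ : ∀ p, U₁ p ∈ Set.Icc (0 : ℝ) 1) (hU₂ : ∀ p, U₂ p ∈ Set.Icc (0 : ℝ) 1)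
    {A : Finset (ι × ι)} (hA : A ⊆ E) :
    |∫ x, homWeight E (fun _ => U₁) x ∂(Measure.pi fun _ => μ) -
        ∫ x, homWeight E (A.piecewise (fun _ => U₂) fun _ => U₁) x ∂(Measure.pi fun _ => μ)| ≤
      A.card * cutNorm₂ μ (fun p => U₁ p - U₂ p) := by
  induction A using Finset.induction_on with
  | empty => simp
  | insert a A ha ih =>
    have haE : a ∈ E := hA (Finset.mem_insert_self a A)
    have hswap := abs_integral_homWeight_sub_update_le μ haE (hsimple a haE).1 (hsimple a haE).2
      (V := A.piecewise (fun _ => U₂) fun _ => U₁)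
      (fun e => A.piecewise_cases (fun _ => U₂) (fun _ => U₁) (i := e) Measurable hU₂m hU₁m)
      (fun e p => A.piecewise_cases (fun _ => U₂) (fun _ => U₁) (i := e)
        (fun f : Ω × Ω → ℝ => f p ∈ Set.Icc (0 : ℝ) 1) (hU₂ p) (hU₁ p)) hU₂m hU₂
    rw [Finset.piecewise_eq_of_notMem _ _ _ ha] at hswap
    rw [Finset.piecewise_insert, Finset.card_insert_of_notMem ha, Nat.cast_succ, add_mul, one_mul]
    exact (abs_sub_le _ _ _).trans
      (add_le_add (ih ((Finset.subset_insert a A).trans hA)) hswap)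

theorem abs_homDensity_sub_le_card_mul_cutNorm₂ {Ω : Type} [MeasurableSpace Ω]
    (μ : Measure Ω) [IsProbabilityMeasure μ] {k : ℕ} {E : Finset (Fin k × Fin k)}
    (hsimple : ∀ p ∈ E, p.1 ≠ p.2 ∧ (p.2, p.1) ∉ E) {U₁ U₂ : Ω × Ω → ℝ}
    (hU₁m : Measurable U₁) (hU₂m : Measurable U₂)
    (hU₁ : ∀ p, U₁ p ∈ Set.Icc (0 : ℝ) 1) (hU₂ : ∀ p, U₂ p ∈ Set.Icc (0 : ℝ) 1) :
    |homDensity μ k E U₁ - homDensity μ k E U₂| ≤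
      E.card * cutNorm₂ μ (fun p => U₁ p - U₂ p) := by
  have hE : homWeight E (E.piecewise (fun _ => U₂) fun _ => U₁) = homWeight E fun _ => U₂ :=
    funext fun x => Finset.prod_congr rfl fun e he => by rw [Finset.piecewise_eq_of_mem _ _ _ he]
  simpa only [homDensity_eq_integral_homWeight, hE] using
    abs_integral_homWeight_sub_piecewise_le μ hsimple hU₁m hU₂m hU₁ hU₂ subset_rfl

/-- Counting lemma: for a finite simple digraph `F` with `m`
edges and `[0,1]`-valued measurable `W₁`, `W₂`,
`|t(F,W₁) − t(F,W₂)| ≤ m · δ□(W₁,W₂)`. -/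
theorem counting_lemma_simple_digraph {S₁ S₂ : Type}
    [MeasurableSpace S₁] [MeasurableSpace S₂]
    (μ₁ : Measure S₁) (μ₂ : Measure S₂)
    [IsProbabilityMeasure μ₁] [IsProbabilityMeasure μ₂]
    (W₁ : S₁ × S₁ → ℝ) (W₂ : S₂ × S₂ → ℝ)
    (hW₁meas : Measurable W₁) (hW₂meas : Measurable W₂)
    (hW₁01 : ∀ p, W₁ p ∈ Set.Icc (0 : ℝ) 1)
    (hW₂01 : ∀ p, W₂ p ∈ Set.Icc (0 : ℝ) 1)
    (k : ℕ) (E : Finset (Fin k × Fin k))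
    (hsimple : ∀ p ∈ E, p.1 ≠ p.2 ∧ (p.2, p.1) ∉ E) :
    |homDensity μ₁ k E W₁ - homDensity μ₂ k E W₂| ≤
      (E.card : ℝ) * cutDist₂ μ₁ μ₂ W₁ W₂ := by
  rw [cutDist₂]
  refine le_mul_csInf_of_forall_le_mul ?_ (Nat.cast_nonneg _) ?_
  · exact ⟨_, S₁ × S₂, _, μ₁.prod μ₂, Prod.fst, Prod.snd, inferInstance, measurePreserving_fst,
      measurePreserving_snd, rfl⟩
  rintro _ ⟨Ω, _, μ, φ₁, φ₂, _, hφ₁, hφ₂, rfl⟩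
  rw [← homDensity_comp_of_measurePreserving hφ₁ hW₁meas,
    ← homDensity_comp_of_measurePreserving hφ₂ hW₂meas]
  exact abs_homDensity_sub_le_card_mul_cutNorm₂ μ hsimple
    (hW₁meas.comp (hφ₁.measurable.prodMap hφ₁.measurable))
    (hW₂meas.comp (hφ₂.measurable.prodMap hφ₂.measurable)) (fun _ => hW₁01 _) fun _ => hW₂01 _
end
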